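/- arXiv:2003.03664 — 2 statements merged into one kernel-verified Lean document; each statement's English description precedes it below -/
import Mathlib

section
/- For any Lebesgue measurable f : [0,1] → [0,1] and any k ∈ ℕ, ∫₀¹ f(x) x^k dx = (1/(k+1)) ∑_{u ∈ {0,1}^k} t(u₁…u_k 1, f), where u₁…u_k 1 denotes the word of length k+1 obtained by appending the letter 1 to u. -/
/-! Summing `f^{u₁}(x₁) ⋯ f^{u_k}(x_k) · f(x_{k+1})` over all `u ∈ {0,1}^k` gives `f(x_{k+1})`,
because `f + (1 - f) = 1` in every coordinate. So the sum of the word densities is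
`(k+1)! ∫ f(x_{k+1})` over the ordered simplex `0 ≤ x₁ < ⋯ < x_{k+1} ≤ 1`. Fixing `x_{k+1} = t`,
the remaining coordinates range over an ordered simplex in `[0,t)^k` of volume `t^k / k!`, which
leaves `(k+1)! / k! · ∫₀¹ f(t) t^k dt`. -/

open MeasureTheory

/-- Density of the binary word `u` in the function `f : [0,1] → [0,1]`:
`t(u,f) = ℓ! ∫_{0 ≤ x₁ < ⋯ < x_ℓ ≤ 1} ∏ f^{uᵢ}(xᵢ) dx`. -/
noncomputable def wordDensity {ℓ : ℕ} (u : Fin ℓ → Bool) (f : ℝ → ℝ) : ℝ :=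
  (Nat.factorial ℓ : ℝ) *
    ∫ x : Fin ℓ → ℝ in
      {x | (∀ i, x i ∈ Set.Icc (0:ℝ) 1) ∧ (∀ i j : Fin ℓ, i < j → x i < x j)},
      ∏ i, (if u i then f (x i) else 1 - f (x i))

/-- The interval (cut) distance `d_□(f,g) = sup_{I ⊆ [0,1] interval} |∫_I (f-g)|`. -/
noncomputable def cutDist (f g : ℝ → ℝ) : ℝ :=
  sSup {y | ∃ a b : ℝ, 0 ≤ a ∧ a ≤ b ∧ b ≤ 1 ∧ y = |∫ x in a..b, (f x - g x)|}

open Set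

theorem Fin.strictMono_snoc_iff {α : Type*} [Preorder α] {n : ℕ} {x : Fin n → α} {t : α} :
    StrictMono (Fin.snoc x t : Fin (n + 1) → α) ↔ StrictMono x ∧ ∀ i, x i < t := by
  refine ⟨fun h => ⟨fun i j hij => ?_, fun i => ?_⟩, fun ⟨hx, ht⟩ i j hij => ?_⟩
  · simpa using h (Fin.castSucc_lt_castSucc_iff.2 hij)
  · simpa using h (Fin.castSucc_lt_last i)
  · induction j using Fin.lastCases with
    | last =>
      obtain ⟨i, rfl⟩ := Fin.exists_castSucc_eq.2 hij.ne
      simpa using ht i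
    | cast j =>
      obtain ⟨i, rfl⟩ := Fin.exists_castSucc_eq.2 (hij.trans (Fin.castSucc_lt_last j)).ne
      simpa using hx (Fin.castSucc_lt_castSucc_iff.1 hij)

theorem Fin.sum_prod_snoc_true {R : Type*} [CommRing R] {k : ℕ} (a : Fin (k + 1) → R) :
    ∑ u : Fin k → Bool, ∏ i, (if (Fin.snoc u true : Fin (k + 1) → Bool) i then a i else 1 - a i) =
      a (Fin.last k) := by
  simp only [Fin.prod_univ_castSucc, Fin.snoc_castSucc, Fin.snoc_last, if_true,
    ← Finset.sum_mul]
  rw [← Fintype.prod_sum (κ := fun _ => Bool)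
    (fun i b => if b then a (Fin.castSucc i) else 1 - a (Fin.castSucc i))]
  simp

theorem lintegral_fin_succ_eq_snoc {ℓ : ℕ} (F : (Fin (ℓ + 1) → ℝ) → ENNReal) (hF : Measurable F) :
    ∫⁻ x, F x = ∫⁻ t, ∫⁻ x : Fin ℓ → ℝ, F (Fin.snoc x t) := by
  have e := volume_preserving_piFinSuccAbove (fun _ : Fin (ℓ + 1) => ℝ) (Fin.last ℓ)
  rw [← e.symm.lintegral_comp hF, Measure.volume_eq_prod, lintegral_prod]
  · simp only [MeasurableEquiv.piFinSuccAbove_symm_apply, Fin.insertNthEquiv_last]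
    rfl
  · exact (hF.comp (MeasurableEquiv.measurable _)).aemeasurable

def increasingTuples (S : Set ℝ) (ℓ : ℕ) : Set (Fin ℓ → ℝ) :=
  {x | (∀ i, x i ∈ S) ∧ StrictMono x}

theorem wordDensity_eq_factorial_mul_setIntegral {ℓ : ℕ} (u : Fin ℓ → Bool) (f : ℝ → ℝ) :
    wordDensity u f = ℓ.factorial *
      ∫ x in increasingTuples (Icc 0 1) ℓ, ∏ i, (if u i then f (x i) else 1 - f (x i)) :=
  rfl

theorem snoc_mem_increasingTuples_iff {S : Set ℝ} {ℓ : ℕ} {x : Fin ℓ → ℝ} {t : ℝ} :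
    Fin.snoc x t ∈ increasingTuples S (ℓ + 1) ↔ t ∈ S ∧ x ∈ increasingTuples (S ∩ Iio t) ℓ := by
  simp only [increasingTuples, mem_ofPred_eq, Fin.forall_fin_succ', Fin.snoc_castSucc,
    Fin.snoc_last, Fin.strictMono_snoc_iff, mem_inter_iff, mem_Iio, forall_and]
  tauto

theorem measurableSet_increasingTuples {S : Set ℝ} (hS : MeasurableSet S) (ℓ : ℕ) :
    MeasurableSet (increasingTuples S ℓ) := by
  simp only [increasingTuples, StrictMono, ofPred_and, ofPred_forall]
  exact (MeasurableSet.iInter fun i => measurable_pi_apply i hS).inter <|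
    .iInter fun i : Fin ℓ => .iInter fun j : Fin ℓ => .iInter fun _ : i < j =>
      measurableSet_lt (measurable_pi_apply i) (measurable_pi_apply j)

theorem lintegral_increasingTuples_succ {S : Set ℝ} (hS : MeasurableSet S) {ℓ : ℕ}
    {g : ℝ → ENNReal} (hg : Measurable g) :
    ∫⁻ x in increasingTuples S (ℓ + 1), g (x (Fin.last ℓ)) =
      ∫⁻ t in S, g t * volume (increasingTuples (S ∩ Iio t) ℓ) := by
  rw [← lintegral_indicator (measurableSet_increasingTuples hS _), lintegral_fin_succ_eq_snoc _
    ((by fun_prop : Measurable fun x : Fin (ℓ + 1) → ℝ => g (x (Fin.last ℓ))).indicator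
      (measurableSet_increasingTuples hS _)),
    ← lintegral_indicator hS]
  refine lintegral_congr fun t => ?_
  by_cases ht : t ∈ S
  · rw [indicator_of_mem ht, ← lintegral_indicator_const
      (measurableSet_increasingTuples (hS.inter measurableSet_Iio) _)]
    congr with x
    by_cases hx : x ∈ increasingTuples (S ∩ Iio t) ℓ
    · rw [indicator_of_mem hx, indicator_of_mem (snoc_mem_increasingTuples_iff.2 ⟨ht, hx⟩),
        Fin.snoc_last]
    · rw [indicator_of_notMem hx,
        indicator_of_notMem fun h => hx (snoc_mem_increasingTuples_iff.1 h).2]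
  · rw [indicator_of_notMem ht, ← lintegral_zero]
    exact lintegral_congr fun x =>
      indicator_of_notMem (fun h => ht (snoc_mem_increasingTuples_iff.1 h).1) _

theorem volume_increasingTuples_Ico (ℓ : ℕ) {y : ℝ} (hy : 0 ≤ y) :
    volume (increasingTuples (Ico 0 y) ℓ) = ENNReal.ofReal (y ^ ℓ / ℓ.factorial) := by
  induction ℓ generalizing y with
  | zero => simp [increasingTuples, Subsingleton.strictMono, volume_pi]
  | succ ℓ ih =>
    have hint : ∫ t in Ico 0 y, t ^ ℓ / ℓ.factorial = y ^ (ℓ + 1) / (ℓ + 1).factorial := by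
      rw [integral_Ico_eq_integral_Ioc, ← intervalIntegral.integral_of_le hy,
        intervalIntegral.integral_div, integral_pow, zero_pow ℓ.succ_ne_zero, sub_zero,
        Nat.factorial_succ]
      push_cast
      field_simp
    calc volume (increasingTuples (Ico 0 y) (ℓ + 1))
        = ∫⁻ x in increasingTuples (Ico 0 y) (ℓ + 1), (fun _ => 1) (x (Fin.last ℓ)) :=
          (setLIntegral_one _).symm
      _ = ∫⁻ t in Ico 0 y, 1 * volume (increasingTuples (Ico 0 y ∩ Iio t) ℓ) :=
          lintegral_increasingTuples_succ measurableSet_Ico measurable_const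
      _ = ∫⁻ t in Ico 0 y, ENNReal.ofReal (t ^ ℓ / ℓ.factorial) :=
          setLIntegral_congr_fun measurableSet_Ico fun t ht => by
            rw [one_mul, Ico_inter_Iio, min_eq_right ht.2.le, ih ht.1]
      _ = ENNReal.ofReal (y ^ (ℓ + 1) / (ℓ + 1).factorial) := by
        rw [← hint, ofReal_integral_eq_lintegral_ofReal]
        · exact (continuous_id.pow ℓ |>.div_const _).integrableOn_Icc.mono_set Ico_subset_Icc_self
        · exact ae_restrict_of_forall_mem measurableSet_Ico fun t ht =>
            div_nonneg (pow_nonneg ht.1 ℓ) (Nat.cast_nonneg _)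

theorem setIntegral_increasingTuples_comp_last {g : ℝ → ℝ} (hg : Measurable g)
    (hg0 : ∀ t ∈ Icc (0 : ℝ) 1, 0 ≤ g t) (k : ℕ) :
    ∫ x in increasingTuples (Icc 0 1) (k + 1), g (x (Fin.last k)) =
      (∫ t in (0 : ℝ)..1, g t * t ^ k) / k.factorial := by
  have hIcc := measurableSet_Icc (a := (0 : ℝ)) (b := 1)
  have hlin : ∫⁻ x in increasingTuples (Icc 0 1) (k + 1), ENNReal.ofReal (g (x (Fin.last k))) =
      ∫⁻ t in Icc 0 1, ENNReal.ofReal (g t * (t ^ k / k.factorial)) := by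
    rw [lintegral_increasingTuples_succ hIcc (g := fun t => ENNReal.ofReal (g t)) (by fun_prop)]
    refine setLIntegral_congr_fun hIcc fun t ht => ?_
    have hsection : Icc 0 1 ∩ Iio t = Ico 0 t := by
      ext s
      simp only [mem_inter_iff, mem_Icc, mem_Iio, mem_Ico]
      exact ⟨fun ⟨⟨h0, _⟩, hs⟩ => ⟨h0, hs⟩, fun ⟨h0, hs⟩ => ⟨⟨h0, hs.le.trans ht.2⟩, hs⟩⟩
    rw [hsection, volume_increasingTuples_Ico k ht.1, ENNReal.ofReal_mul (hg0 t ht)]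
  -- both sides are `toReal` of the same lintegral, so no integrability of `g` is needed
  rw [integral_eq_lintegral_of_nonneg_ae, hlin, intervalIntegral.integral_of_le zero_le_one,
    ← integral_Icc_eq_integral_Ioc, ← integral_div, integral_eq_lintegral_of_nonneg_ae]
  · simp_rw [mul_div_assoc]
  · exact ae_restrict_of_forall_mem hIcc fun t ht =>
      div_nonneg (mul_nonneg (hg0 t ht) (pow_nonneg ht.1 k)) (Nat.cast_nonneg _)
  · fun_prop
  · exact ae_restrict_of_forall_mem (measurableSet_increasingTuples hIcc _) fun x hx =>
      hg0 _ (hx.1 _)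
  · exact (hg.comp (measurable_pi_apply _)).aestronglyMeasurable

theorem integrableOn_increasingTuples_prod_ite {f : ℝ → ℝ}
    (hf : Measurable f) (hf1 : ∀ x ∈ Icc (0 : ℝ) 1, f x ∈ Icc (0 : ℝ) 1) {ℓ : ℕ} (u : Fin ℓ → Bool) :
    IntegrableOn (fun x : Fin ℓ → ℝ => ∏ i, (if u i then f (x i) else 1 - f (x i)))
      (increasingTuples (Icc 0 1) ℓ) := by
  have hfinite : volume (increasingTuples (Icc (0 : ℝ) 1) ℓ) < ⊤ :=
    ((isCompact_univ_pi fun _ => isCompact_Icc).isBounded.subset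
      fun x hx i _ => hx.1 i).measure_lt_top
  refine IntegrableOn.of_bound hfinite ?_ 1 <| ae_restrict_of_forall_mem
    (measurableSet_increasingTuples measurableSet_Icc ℓ) fun x hx => ?_
  · refine (Finset.measurable_prod _ fun i _ => ?_).aestronglyMeasurable
    cases u i <;> simp only [Bool.false_eq_true, if_true, if_false] <;> fun_prop
  · rw [Real.norm_eq_abs, Finset.abs_prod]
    refine Finset.prod_le_one (fun i _ => abs_nonneg _) fun i _ => ?_
    obtain ⟨h0, h1⟩ := hf1 _ (hx.1 i)
    cases u i <;> simp only [Bool.false_eq_true, if_true, if_false, abs_le] <;>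
      constructor <;> linarith

theorem stmt3 (f : ℝ → ℝ) (hf : Measurable f)
    (hf1 : ∀ x ∈ Set.Icc (0:ℝ) 1, f x ∈ Set.Icc (0:ℝ) 1) (k : ℕ) :
    ∫ x in (0:ℝ)..1, f x * x ^ k =
      (1 / ((k : ℝ) + 1)) * ∑ u : Fin k → Bool, wordDensity (Fin.snoc u true) f := by
  have hsum : ∑ u : Fin k → Bool, wordDensity (Fin.snoc u true) f =
      (k + 1).factorial * ∫ x in increasingTuples (Icc 0 1) (k + 1), f (x (Fin.last k)) := by
    simp only [wordDensity_eq_factorial_mul_setIntegral]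
    rw [← Finset.mul_sum, ← integral_finsetSum _ fun u _ =>
      integrableOn_increasingTuples_prod_ite hf hf1 _]
    simp_rw [Fin.sum_prod_snoc_true]
  rw [hsum, setIntegral_increasingTuples_comp_last hf (fun t ht => (hf1 t ht).1),
    Nat.factorial_succ]
  push_cast
  field_simp
end

section
/- The metric space (𝒲, d_□) is compact, where 𝒲 is the set of Lebesgue measurable functions f : [0,1] → [0,1] modulo equality almost everywhere. -/
/-!
The primitives `x ↦ ∫₀ˣ fₙ` are monotone, `1`-Lipschitz and vanish at `0`, so by
Arzelà–Ascoli a subsequence converges uniformly on `[0,1]` to a function `F` of the same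
kind. Such an `F` is the primitive of a `[0,1]`-valued density `g`: the Stieltjes measure of
`F` is dominated by Lebesgue measure, and `g` is its Radon–Nikodym derivative. Since
`∫ₐᵇ (fₙ - g)` is a difference of two values of the primitive of `fₙ - g`, the interval
distance is at most twice the uniform distance of the primitives.
-/

open MeasureTheory

open Set

lemma lipschitzWith_one_of_monotone_sub {F : ℝ → ℝ} (hF : Monotone F)
    (hF' : Monotone fun x => x - F x) : LipschitzWith 1 F := by
  refine LipschitzWith.of_dist_le_mul fun x y => ?_
  wlog hxy : y ≤ x generalizing x y
  · rw [dist_comm, dist_comm x]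
    exact this y x (le_of_not_ge hxy)
  rw [NNReal.coe_one, one_mul, Real.dist_eq, Real.dist_eq, abs_of_nonneg (sub_nonneg.2 (hF hxy)),
    abs_of_nonneg (sub_nonneg.2 hxy)]
  linarith [hF' hxy]

lemma monotone_sub_IccExtend {a b : ℝ} (h : a ≤ b) {F : Icc a b → ℝ}
    (hF' : Monotone fun x : Icc a b => (x : ℝ) - F x) :
    Monotone fun x => x - IccExtend h F x := by
  intro x y hxy
  have hproj : projIcc a b h y - projIcc a b h x ≤ y - x :=
    (le_abs_self _).trans ((abs_projIcc_sub_projIcc h).trans (abs_of_nonneg (sub_nonneg.2 hxy)).le)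
  have := hF' (monotone_projIcc h hxy)
  change x - F (projIcc a b h x) ≤ y - F (projIcc a b h y)
  linarith

theorem exists_measurable_integral_eq_sub {F : ℝ → ℝ} (hF : Monotone F)
    (hF' : Monotone fun x => x - F x) :
    ∃ g : ℝ → ℝ, Measurable g ∧ (∀ x, g x ∈ Icc (0 : ℝ) 1) ∧
      ∀ a b, a ≤ b → ∫ t in a..b, g t = F b - F a := by
  have hc := (lipschitzWith_one_of_monotone_sub hF hF').continuous
  let S : StieltjesFunction ℝ := ⟨F, hF, fun x => hc.continuousWithinAt⟩
  let T : StieltjesFunction ℝ :=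
    ⟨fun x => x - F x, hF', fun x => (continuous_id.sub hc).continuousWithinAt⟩
  have hST : S.measure + T.measure = volume := by
    rw [← StieltjesFunction.measure_add, Real.volume_eq_stieltjes_id]
    congr 1
    ext x
    exact add_sub_cancel _ _
  have hS : S.measure ≤ volume := hST ▸ Measure.le_add_right le_rfl
  refine ⟨fun x => min 1 (S.measure.rnDeriv volume x).toReal,
    measurable_const.min (Measure.measurable_rnDeriv _ _).ennreal_toReal,
    fun x => ⟨le_min zero_le_one ENNReal.toReal_nonneg, min_le_left _ _⟩, fun a b hab => ?_⟩
  have hmin : (fun x => min 1 (S.measure.rnDeriv volume x).toReal)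
      =ᵐ[volume] fun x => (S.measure.rnDeriv volume x).toReal := by
    filter_upwards [Measure.rnDeriv_le_one_of_le hS] with x hx
    exact min_eq_right (ENNReal.toReal_le_of_le_ofReal zero_le_one (by simpa using hx))
  rw [intervalIntegral.integral_of_le hab, integral_congr_ae (ae_restrict_of_ae hmin),
    Measure.setIntegral_toReal_rnDeriv (Measure.absolutelyContinuous_of_le hS),
    measureReal_def, S.measure_Ioc, ENNReal.toReal_ofReal (sub_nonneg.2 (hF hab))]

open unitInterval BoundedContinuousFunction

lemma intervalIntegrable_of_norm_le {E : Type*} [NormedAddCommGroup E] {f : ℝ → E}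
    (hf : AEStronglyMeasurable f volume) {a b M : ℝ} (hM : ∀ x ∈ uIcc a b, ‖f x‖ ≤ M) :
    IntervalIntegrable f volume a b :=
  (intervalIntegrable_iff' (μ := volume)).2 <| Measure.integrableOn_of_bounded
    isCompact_uIcc.measure_lt_top.ne hf (ae_restrict_of_forall_mem measurableSet_uIcc hM)

lemma intervalIntegrable_of_mapsTo_Icc {f : ℝ → ℝ} (hf : Measurable f)
    (hf1 : ∀ x ∈ Icc (0 : ℝ) 1, f x ∈ Icc (0 : ℝ) 1) : IntervalIntegrable f volume 0 1 :=
  intervalIntegrable_of_norm_le hf.aestronglyMeasurable (M := 1) fun x hx => by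
    rw [uIcc_of_le zero_le_one] at hx
    exact abs_le.2 ⟨by linarith [(hf1 x hx).1], (hf1 x hx).2⟩

lemma IntervalIntegrable.of_unitInterval {f : ℝ → ℝ} (hf : IntervalIntegrable f volume 0 1)
    (a b : I) : IntervalIntegrable f volume a b :=
  hf.mono_set <| uIcc_subset_uIcc (by rw [uIcc_of_le zero_le_one]; exact a.2)
    (by rw [uIcc_of_le zero_le_one]; exact b.2)

noncomputable def primitive (f : ℝ → ℝ) (hf : IntervalIntegrable f volume 0 1) :
    I →ᵇ ℝ :=
  mkOfCompact ⟨fun x => ∫ t in 0..(x : ℝ), f t,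
    (intervalIntegral.continuousOn_primitive_interval
      ((intervalIntegrable_iff' (μ := volume)).1 hf)).comp_continuous continuous_subtype_val
      fun x => by rw [uIcc_of_le zero_le_one]; exact x.2⟩

@[simp]
lemma primitive_apply {f : ℝ → ℝ} (hf : IntervalIntegrable f volume 0 1) (x : I) :
    primitive f hf x = ∫ t in 0..(x : ℝ), f t :=
  rfl

lemma integral_eq_primitive_sub {f : ℝ → ℝ} (hf : IntervalIntegrable f volume 0 1) (a b : I) :
    ∫ t in a..b, f t = primitive f hf b - primitive f hf a :=
  (intervalIntegral.integral_interval_sub_left (hf.of_unitInterval 0 b)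
    (hf.of_unitInterval 0 a)).symm

lemma cutDist_nonneg (f g : ℝ → ℝ) : 0 ≤ cutDist f g :=
  Real.sSup_nonneg fun _ ⟨_, _, _, _, _, hy⟩ => hy ▸ abs_nonneg _

theorem cutDist_le_two_mul_dist_primitive {f g : ℝ → ℝ} (hf : IntervalIntegrable f volume 0 1)
    (hg : IntervalIntegrable g volume 0 1) :
    cutDist f g ≤ 2 * dist (primitive f hf) (primitive g hg) := by
  refine csSup_le ⟨_, 0, 0, le_rfl, le_rfl, zero_le_one, rfl⟩ ?_
  rintro _ ⟨a, b, ha, hab, hb, rfl⟩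
  lift a to I using ⟨ha, hab.trans hb⟩
  lift b to I using ⟨ha.trans hab, hb⟩
  rw [intervalIntegral.integral_sub (hf.of_unitInterval a b) (hg.of_unitInterval a b),
    integral_eq_primitive_sub hf, integral_eq_primitive_sub hg]
  calc _ = |(primitive f hf b - primitive g hg b) - (primitive f hf a - primitive g hg a)| := by
        ring_nf
    _ ≤ dist (primitive f hf b) (primitive g hg b) + dist (primitive f hf a) (primitive g hg a) :=
        abs_sub _ _
    _ ≤ 2 * dist (primitive f hf) (primitive g hg) := by
        linarith [dist_coe_le_dist (f := primitive f hf) (g := primitive g hg) a,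
          dist_coe_le_dist (f := primitive f hf) (g := primitive g hg) b]

/-- The primitives of `[0,1]`-valued densities on `[0,1]`. -/
def densityPrimitives : Set (I →ᵇ ℝ) :=
  {F | Monotone F ∧ Monotone (fun x : I => (x : ℝ) - F x) ∧ F 0 = 0}

lemma primitive_mem_densityPrimitives {f : ℝ → ℝ} (hf : IntervalIntegrable f volume 0 1)
    (hf1 : ∀ x ∈ Icc (0 : ℝ) 1, f x ∈ Icc (0 : ℝ) 1) :
    primitive f hf ∈ densityPrimitives := by
  have hmem (a b : I) : ∀ t ∈ Icc (a : ℝ) b, f t ∈ Icc (0 : ℝ) 1 :=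
    fun t ht => hf1 t ⟨a.2.1.trans ht.1, ht.2.trans b.2.2⟩
  refine ⟨fun a b hab => ?_, fun a b hab => ?_, by simp⟩
  · have := intervalIntegral.integral_nonneg (μ := volume) hab fun t ht => (hmem a b t ht).1
    linarith [integral_eq_primitive_sub hf a b]
  · have := intervalIntegral.integral_mono_on hab (hf.of_unitInterval a b)
      intervalIntegrable_const fun t ht => (hmem a b t ht).2
    simp only [intervalIntegral.integral_const, smul_eq_mul, mul_one] at this
    linarith [integral_eq_primitive_sub hf a b]

lemma lipschitzWith_one_of_mem_densityPrimitives {F : I →ᵇ ℝ} (hF : F ∈ densityPrimitives) :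
    LipschitzWith 1 F := by
  have := (lipschitzWith_one_of_monotone_sub (hF.1.IccExtend zero_le_one)
    (monotone_sub_IccExtend zero_le_one hF.2.1)).comp (LipschitzWith.subtype_val I)
  simpa [Function.comp_def] using this

lemma mem_Icc_of_mem_densityPrimitives {F : I →ᵇ ℝ} (hF : F ∈ densityPrimitives) (x : I) :
    F x ∈ Icc (0 : ℝ) 1 := by
  have h0 := hF.1 (nonneg' : 0 ≤ x)
  have h1 := hF.2.1 (nonneg' : 0 ≤ x)
  simp only [hF.2.2, Icc.coe_zero, sub_zero] at h0 h1
  exact ⟨h0, by linarith [x.2.2]⟩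

theorem isCompact_densityPrimitives : IsCompact densityPrimitives := by
  have hclosed : IsClosed densityPrimitives :=
    (isClosed_monotone.preimage continuous_coe).inter
      ((isClosed_monotone.preimage
        ((continuous_const (y := ((↑) : I → ℝ))).sub continuous_coe)).inter
        (isClosed_eq (continuous_eval_const 0) continuous_const))
  simpa [hclosed.closure_eq] using arzela_ascoli (Icc 0 1) isCompact_Icc densityPrimitives
    (fun F x hF => mem_Icc_of_mem_densityPrimitives hF x)
    (LipschitzWith.uniformEquicontinuous _ 1 fun F =>
      lipschitzWith_one_of_mem_densityPrimitives F.2).equicontinuous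

/-- Compactness of `(𝒲, d_□)`: every sequence of measurable `[0,1]`-valued functions on `[0,1]`
has a subsequence converging in the interval distance to a measurable `[0,1]`-valued limit. -/
theorem stmt9 (f : ℕ → ℝ → ℝ) (hf : ∀ n, Measurable (f n))
    (hf1 : ∀ n, ∀ x ∈ Set.Icc (0:ℝ) 1, f n x ∈ Set.Icc (0:ℝ) 1) :
    ∃ g : ℝ → ℝ, Measurable g ∧ (∀ x ∈ Set.Icc (0:ℝ) 1, g x ∈ Set.Icc (0:ℝ) 1) ∧
      ∃ φ : ℕ → ℕ, StrictMono φ ∧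
        Filter.Tendsto (fun k => cutDist (f (φ k)) g) Filter.atTop (nhds 0) := by
  have hfint n := intervalIntegrable_of_mapsTo_Icc (hf n) (hf1 n)
  obtain ⟨F, hF, φ, hφ, hlim⟩ := isCompact_densityPrimitives.tendsto_subseq
    fun n => primitive_mem_densityPrimitives (hfint n) (hf1 n)
  obtain ⟨g, hg, hg1, hgF⟩ := exists_measurable_integral_eq_sub
    (hF.1.IccExtend zero_le_one) (monotone_sub_IccExtend zero_le_one hF.2.1)
  have hgint := intervalIntegrable_of_mapsTo_Icc hg fun x _ => hg1 x
  have hprim : primitive g hgint = F := by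
    ext x
    rw [primitive_apply, hgF 0 x x.2.1, IccExtend_val, IccExtend_left]
    exact sub_eq_self.2 hF.2.2
  refine ⟨g, hg, fun x _ => hg1 x, φ, hφ, squeeze_zero (fun _ => cutDist_nonneg _ _)
    (fun k => cutDist_le_two_mul_dist_primitive (hfint (φ k)) hgint) ?_⟩
  rw [hprim]
  simpa using (tendsto_iff_dist_tendsto_zero.1 hlim).const_mul 2
end
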